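/- arXiv:1101.2366 — 4 statements merged into one kernel-verified Lean document; each statement's English description precedes it below -/
import Mathlib

section
/- For every n ≥ 0, the polynomial identity X^{(1+(-1)^n)/2} · P_{φ^n(2)} + X^{(1-(-1)^n)/2} · P_{φ^n(11)} = X + 1 holds, where for a word w = a_1⋯a_k over {1,2}, P_w(X) = (-X)^k + Σ_{i=1}^k a_i (-X)^{k-i}, and φ is the morphism φ(1)=2, φ(2)=211. -/
/-- The morphism φ on the alphabet {1,2}: φ(1) = 2, φ(2) = 211. -/
def phi : ℕ → List ℕ
  | 1 => [2]
  | 2 => [2, 1, 1]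
  | _ => []

/-- Extension of φ to words by concatenation. -/
def phiW (w : List ℕ) : List ℕ := w.flatMap phi

/-- The polynomial P_{a₁⋯a_k}(X) = (-X)^k + Σ_{i=1}^k a_i (-X)^{k-i}, evaluated at x. -/
def P (w : List ℕ) (x : ℝ) : ℝ :=
  (-x) ^ w.length + ∑ i ∈ Finset.range w.length, (w.getD i 0 : ℝ) * (-x) ^ (w.length - 1 - i)

/-!
Write `A n = φⁿ(2)` and `B n = φⁿ(11)`. Since `φ(2) = 2·11` and `φ(11) = 2·2`, we get
`A (n+1) = A n · B n` and `B (n+1) = A n · A n`, while `P` turns concatenation into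
`P (w u) = (-X)^|u| (P w - 1) + P u`. The lengths satisfy `|A n|` odd, `|B n|` even and
`|B n| - |A n| = (-1)ⁿ`, which is exactly what makes the `(P (A n) - 1)`-terms cancel in the
identity at `n + 1`, leaving the identity at `n`.
-/

lemma P_nil (x : ℝ) : P [] x = 1 := by
  simp [P]

lemma P_cons (a : ℕ) (w : List ℕ) (x : ℝ) :
    P (a :: w) x = (-x) ^ w.length * ((a : ℝ) - x - 1) + P w x := by
  unfold P
  rw [List.length_cons, Finset.sum_range_succ']
  have h_tail : ∑ i ∈ Finset.range w.length,
        ((a :: w).getD (i + 1) 0 : ℝ) * (-x) ^ (w.length + 1 - 1 - (i + 1))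
      = ∑ i ∈ Finset.range w.length, (w.getD i 0 : ℝ) * (-x) ^ (w.length - 1 - i) := by
    refine Finset.sum_congr rfl fun i _ => ?_
    rw [show w.length + 1 - 1 - (i + 1) = w.length - 1 - i by omega, List.getD_cons_succ]
  rw [h_tail]
  simp only [List.getD_cons_zero, Nat.add_sub_cancel, Nat.sub_zero, pow_succ]
  ring

lemma P_append (w u : List ℕ) (x : ℝ) :
    P (w ++ u) x = (-x) ^ u.length * (P w x - 1) + P u x := by
  induction w with
  | nil => simp [P_nil]
  | cons a w ih =>
    rw [List.cons_append, P_cons, P_cons, ih, List.length_append, pow_add]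
    ring

lemma P_append_add_P_append_self (a b : List ℕ) (x : ℝ) (e f : ℕ)
    (h : x ^ e * (-x) ^ b.length + x ^ f * (-x) ^ a.length = 0) :
    x ^ e * P (a ++ b) x + x ^ f * P (a ++ a) x = x ^ f * P a x + x ^ e * P b x := by
  rw [P_append, P_append]
  linear_combination (P a x - 1) * h

lemma semiconj₂_phiW_append : Function.Semiconj₂ phiW (· ++ ·) (· ++ ·) :=
  fun _ _ => List.flatMap_append

lemma iterate_phiW_two_succ (n : ℕ) :
    phiW^[n + 1] [2] = phiW^[n] [2] ++ phiW^[n] [1, 1] :=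
  semiconj₂_phiW_append.iterate n [2] [1, 1]

lemma iterate_phiW_one_one_succ (n : ℕ) :
    phiW^[n + 1] [1, 1] = phiW^[n] [2] ++ phiW^[n] [2] :=
  semiconj₂_phiW_append.iterate n [2] [2]

lemma even_length_iterate_phiW_one_one (n : ℕ) : Even (phiW^[n] [1, 1]).length := by
  cases n with
  | zero => simp
  | succ m =>
    rw [iterate_phiW_one_one_succ, List.length_append]
    exact ⟨_, rfl⟩

lemma odd_length_iterate_phiW_two (n : ℕ) : Odd (phiW^[n] [2]).length := by
  induction n with
  | zero => simp
  | succ m ih =>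
    rw [iterate_phiW_two_succ, List.length_append]
    exact ih.add_even (even_length_iterate_phiW_one_one m)

lemma length_iterate_phiW (n : ℕ) :
    if Even n then (phiW^[n] [1, 1]).length = (phiW^[n] [2]).length + 1
    else (phiW^[n] [2]).length = (phiW^[n] [1, 1]).length + 1 := by
  induction n with
  | zero => simp
  | succ m ih =>
    rw [iterate_phiW_two_succ, iterate_phiW_one_one_succ, List.length_append, List.length_append]
    by_cases hm : Even m
    · rw [if_pos hm] at ih
      rw [if_neg (by simpa [Nat.even_add_one] using hm)]
      omega
    · rw [if_neg hm] at ih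
      rw [if_pos (Nat.even_add_one.mpr hm)]
      omega

theorem P_phi_two_add_eleven (n : ℕ) (x : ℝ) :
    x ^ (if Even n then 1 else 0) * P (phiW^[n] [2]) x
      + x ^ (if Even n then 0 else 1) * P (phiW^[n] [1, 1]) x = x + 1 := by
  induction n with
  | zero =>
    simp only [Function.iterate_zero, id_eq, if_pos Even.zero, P_cons, P_nil, List.length_cons,
      List.length_nil]
    push_cast
    ring
  | succ m ih =>
    have hA := odd_length_iterate_phiW_two m
    have hB := even_length_iterate_phiW_one_one m
    have hlen := length_iterate_phiW m
    rw [iterate_phiW_two_succ, iterate_phiW_one_one_succ, P_append_add_P_append_self]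
    all_goals
      by_cases hm : Even m <;>
        simp only [Nat.even_add_one, hm, if_true, if_false, not_true, not_false_eq_true] at ih hlen ⊢
    · linear_combination ih
    · linear_combination ih
    · rw [hB.neg_pow, hA.neg_pow, hlen]
      ring
    · rw [hB.neg_pow, hA.neg_pow, hlen]
      ring
end

section
/- For every n ≥ 0, the polynomial identity 1 - P_{φ^n(1)}(X) = X^{(1+(-1)^n)/2} · Π_{m=0}^{n-1} (X^{|φ^m(1)|} - 1) holds, where P_w(X) = (-X)^k + Σ_{i=1}^k a_i (-X)^{k-i} for a word w = a_1⋯a_k over {1,2}, and φ is the morphism φ(1)=2, φ(2)=211. -/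
/-! Write `wₙ = φⁿ(1)` and `ℓₙ = |wₙ|`. Since `φ²(1) = 211`, `wₙ₊₂ = wₙ₊₁ wₙ wₙ`. The map
`w ↦ 1 - P_w` satisfies `1 - P_{uv} = (-X)^{|v|} (1 - P_u) + (1 - P_v)`, and every `ℓₙ` is odd, so
`1 - P_{wₙ₊₂} = X^{2ℓₙ} (1 - P_{wₙ₊₁}) - (X^{ℓₙ} - 1) (1 - P_{wₙ})`. The right-hand side of the
theorem satisfies the same recurrence because `ℓₙ₊₁ + εₙ = 2ℓₙ + εₙ₊₁`, where `εₙ = 1` for even `n`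
and `0` otherwise. -/

lemma one_sub_P_append (u v : List ℕ) (x : ℝ) :
    1 - P (u ++ v) x = (-x) ^ v.length * (1 - P u x) + (1 - P v x) := by
  have head : ∀ i ∈ Finset.range u.length,
      ((u ++ v).getD i 0 : ℝ) * (-x) ^ (u.length + v.length - 1 - i)
        = (-x) ^ v.length * ((u.getD i 0 : ℝ) * (-x) ^ (u.length - 1 - i)) := by
    intro i hi
    rw [Finset.mem_range] at hi
    rw [List.getD_append u v 0 i hi, show u.length + v.length - 1 - i
      = (u.length - 1 - i) + v.length by omega, pow_add]
    ring
  have tail : ∀ j ∈ Finset.range v.length,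
      ((u ++ v).getD (u.length + j) 0 : ℝ) * (-x) ^ (u.length + v.length - 1 - (u.length + j))
        = (v.getD j 0 : ℝ) * (-x) ^ (v.length - 1 - j) := by
    intro j _
    rw [List.getD_append_right u v 0 _ (by omega), Nat.add_sub_cancel_left,
      show u.length + v.length - 1 - (u.length + j) = v.length - 1 - j by omega]
  simp only [P, List.length_append, Finset.sum_range_add]
  rw [Finset.sum_congr rfl head, Finset.sum_congr rfl tail, ← Finset.mul_sum, pow_add]
  ring

lemma iterate_phiW_append (n : ℕ) (u v : List ℕ) :
    phiW^[n] (u ++ v) = phiW^[n] u ++ phiW^[n] v :=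
  Function.Semiconj₂.iterate (f := phiW) (op := (· ++ ·)) (fun _ _ => List.flatMap_append) n u v

lemma iterate_phiW_one_add_two (n : ℕ) :
    phiW^[n + 2] [1] = phiW^[n + 1] [1] ++ phiW^[n] [1] ++ phiW^[n] [1] := by
  rw [Function.iterate_add_apply, Function.iterate_add_apply,
    show phiW^[2] [1] = [2] ++ [1] ++ [1] from rfl, iterate_phiW_append, iterate_phiW_append]
  rfl

lemma length_iterate_phiW_one_add_two (n : ℕ) :
    (phiW^[n + 2] [1]).length = (phiW^[n + 1] [1]).length + 2 * (phiW^[n] [1]).length := by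
  rw [iterate_phiW_one_add_two, List.length_append, List.length_append]
  ring

lemma odd_length_iterate_phiW_one (n : ℕ) : Odd (phiW^[n] [1]).length := by
  induction n using Nat.twoStepInduction with
  | zero => decide
  | one => decide
  | more n _ ih => rw [length_iterate_phiW_one_add_two]; exact ih.add_even (even_two_mul _)

lemma length_iterate_phiW_one_succ_add (n : ℕ) :
    (phiW^[n + 1] [1]).length + (if Even n then 1 else 0)
      = 2 * (phiW^[n] [1]).length + (if Even (n + 1) then 1 else 0) := by
  induction n with
  | zero => decide
  | succ n ih =>
    have parity : Even (n + 1 + 1) ↔ Even n := by simp [Nat.even_add]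
    simp only [length_iterate_phiW_one_add_two, parity]
    omega

lemma one_sub_P_iterate_phiW_one_add_two (n : ℕ) (x : ℝ) :
    1 - P (phiW^[n + 2] [1]) x
      = (x ^ (phiW^[n] [1]).length) ^ 2 * (1 - P (phiW^[n + 1] [1]) x)
        - (x ^ (phiW^[n] [1]).length - 1) * (1 - P (phiW^[n] [1]) x) := by
  rw [iterate_phiW_one_add_two, one_sub_P_append, one_sub_P_append,
    (odd_length_iterate_phiW_one n).neg_pow]
  ring

theorem one_sub_P_phi_one (n : ℕ) (x : ℝ) :
    1 - P (phiW^[n] [1]) x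
      = x ^ (if Even n then 1 else 0) * ∏ m ∈ Finset.range n, (x ^ (phiW^[m] [1]).length - 1) := by
  induction n using Nat.twoStepInduction with
  | zero => norm_num [P]
  | one => norm_num [P, phiW, phi]; ring
  | more n ih₀ ih₁ =>
    have exponents : x ^ (if Even n then 1 else 0) * x ^ (phiW^[n + 1] [1]).length
        = (x ^ (phiW^[n] [1]).length) ^ 2 * x ^ (if Even (n + 1) then 1 else 0) := by
      rw [← pow_add, ← pow_mul, ← pow_add, add_comm, length_iterate_phiW_one_succ_add, mul_comm]
    have parity : Even (n + 2) ↔ Even n := by simp [Nat.even_add]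
    rw [one_sub_P_iterate_phiW_one_add_two, ih₀, ih₁, Finset.prod_range_succ _ (n + 1),
      Finset.prod_range_succ _ n]
    simp only [parity]
    linear_combination (-(∏ m ∈ Finset.range n, (x ^ (phiW^[m] [1]).length - 1))
      * (x ^ (phiW^[n] [1]).length - 1)) * exponents
end

section
/- For every x ∈ (0,1] and β > 1, the series Σ_{k=1}^∞ (-d_k(x))/(-β)^k converges to x, where d_1(x) = ⌊βx⌋ + 1 and d_k(x) = d_1(T_{-β}^{k-1}(x)) are the digits generated by the negative beta transformation T_{-β}(x) = -βx + ⌊βx⌋ + 1. -/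
/-- The negative beta transformation T_{-β}(x) = -βx + ⌊βx⌋ + 1. -/
noncomputable def Tneg (β x : ℝ) : ℝ := -β * x + ⌊β * x⌋ + 1

/-- The digits d_k(x) = ⌊β T_{-β}^{k-1}(x)⌋ + 1 (indexed so that `d β x k` is d_{k+1}(x)). -/
noncomputable def d (β x : ℝ) (k : ℕ) : ℤ := ⌊β * (Tneg β)^[k] x⌋ + 1

/-!
Each step of the transformation reads `T^{k+1} x = -β T^k x + d_k`, so the `k`-th term of the
series is `T^k x / (-β)^k - T^{k+1} x / (-β)^{k+1}` and the series telescopes. Since every orbit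
point lies in `(0, 1]`, the sequence `T^k x / (-β)^k` is dominated by the geometric sequence
`β⁻ᵏ`, hence summable, and the telescoping sum is its first entry `x`.
-/

theorem Summable.hasSum_sub_succ {G : Type*} [AddCommGroup G] [TopologicalSpace G]
    [IsTopologicalAddGroup G] {f : ℕ → G} (hf : Summable f) :
    HasSum (fun n => f n - f (n + 1)) (f 0) := by
  have hsucc : HasSum (fun n => f (n + 1)) (∑' n, f n - f 0) := by
    simpa using (hasSum_nat_add_iff' 1).2 hf.hasSum
  simpa using hf.hasSum.sub hsucc

theorem Tneg_eq_one_sub_fract (β x : ℝ) : Tneg β x = 1 - Int.fract (β * x) := by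
  rw [Tneg, Int.fract]
  ring

theorem Tneg_mem_Ioc (β x : ℝ) : Tneg β x ∈ Set.Ioc (0 : ℝ) 1 := by
  rw [Tneg_eq_one_sub_fract]
  constructor
  · linarith [Int.fract_lt_one (β * x)]
  · linarith [Int.fract_nonneg (β * x)]

theorem iterate_Tneg_mem_Ioc (β : ℝ) {x : ℝ} (hx : x ∈ Set.Ioc (0 : ℝ) 1) (n : ℕ) :
    (Tneg β)^[n] x ∈ Set.Ioc (0 : ℝ) 1 := by
  cases n with
  | zero => exact hx
  | succ n =>
    rw [Function.iterate_succ_apply']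
    exact Tneg_mem_Ioc β _

theorem iterate_Tneg_succ (β x : ℝ) (k : ℕ) :
    (Tneg β)^[k + 1] x = -β * (Tneg β)^[k] x + d β x k := by
  rw [Function.iterate_succ_apply', Tneg, d]
  push_cast
  ring

theorem neg_digit_div_eq_sub {β : ℝ} (hβ : β ≠ 0) (x : ℝ) (k : ℕ) :
    -(d β x k : ℝ) / (-β) ^ (k + 1)
      = (Tneg β)^[k] x / (-β) ^ k - (Tneg β)^[k + 1] x / (-β) ^ (k + 1) := by
  have hβ' : -β ≠ 0 := neg_ne_zero.2 hβ
  rw [iterate_Tneg_succ, pow_succ]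
  field_simp
  ring

theorem summable_iterate_Tneg_div_pow {β : ℝ} (hβ : 1 < β) {x : ℝ}
    (hx : x ∈ Set.Ioc (0 : ℝ) 1) :
    Summable (fun k : ℕ => (Tneg β)^[k] x / (-β) ^ k) := by
  have hβ0 : 0 < β := zero_lt_one.trans hβ
  refine Summable.of_norm_bounded
    (summable_geometric_of_lt_one (inv_nonneg.2 hβ0.le) (inv_lt_one_of_one_lt₀ hβ)) fun k => ?_
  have hmem := iterate_Tneg_mem_Ioc β hx k
  rw [norm_div, norm_pow, norm_neg, Real.norm_of_nonneg hβ0.le,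
    Real.norm_of_nonneg hmem.1.le, inv_pow, div_eq_mul_inv]
  exact mul_le_of_le_one_left (by positivity) hmem.2

theorem neg_beta_expansion (β : ℝ) (hβ : 1 < β) (x : ℝ) (hx : x ∈ Set.Ioc (0 : ℝ) 1) :
    HasSum (fun k : ℕ => -(d β x k : ℝ) / (-β) ^ (k + 1)) x := by
  have hβ0 : β ≠ 0 := (zero_lt_one.trans hβ).ne'
  simp_rw [neg_digit_div_eq_sub hβ0]
  simpa using (summable_iterate_Tneg_div_pow hβ hx).hasSum_sub_succ
end

section
/- Let β > 1 satisfy β^4 = β + 1, let α be a complex algebraic conjugate of β with |α| > 1, and let σ: ℚ(β) → ℚ(α) be the field homomorphism with σ(β) = α. If x ∈ [0,1] ∩ ℚ(β), then |σ(T_β(x))| ≥ |α|·|σ(x)| − 1, where T_β(x) = βx − ⌊βx⌋. Consequently, if |σ(x)| > 1/(|α| − 1), then |σ(T_β(x))| > |σ(x)|. -/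
/-!
Since `β < 2`, the digit `d = ⌊β x⌋` of `x ∈ [0, 1]` is `0` or `1`, so `T_β x = β x - d` is an
identity in `ℚ(β)`. Applying `σ` gives `σ (T_β x) = α σ(x) - d`, and the reverse triangle inequality
yields `|σ (T_β x)| ≥ |α| |σ x| - 1`, which exceeds `|σ x|` as soon as `(|α| - 1) |σ x| > 1`.
-/

lemma lt_two_of_pow_four_eq_add_one {β : ℝ} (h : β ^ 4 = β + 1) : β < 2 := by
  nlinarith [sq_nonneg β, sq_nonneg (β * β), sq_nonneg (β * β - 2)]

lemma floor_mul_mem_Icc_zero_one {β x : ℝ} (hβ0 : 0 ≤ β) (hβ2 : β < 2) (hx : x ∈ Set.Icc 0 1) :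
    ⌊β * x⌋ ∈ Set.Icc 0 1 := by
  obtain ⟨hx0, hx1⟩ := hx
  refine ⟨Int.floor_nonneg.2 (mul_nonneg hβ0 hx0), Int.lt_add_one_iff.1 (Int.floor_lt.2 ?_)⟩
  push_cast
  nlinarith

lemma norm_mul_sub_one_le_norm_mul_sub {𝕜 : Type*} [NormedDivisionRing 𝕜]
    (a z : 𝕜) {n : ℤ} (hn : n ∈ Set.Icc 0 1) : ‖a‖ * ‖z‖ - 1 ≤ ‖a * z - n‖ := by
  have hnorm : ‖(n : 𝕜)‖ ≤ 1 := by
    obtain ⟨hn0, hn1⟩ := hn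
    obtain rfl | rfl : n = 0 ∨ n = 1 := by omega
    all_goals simp
  calc ‖a‖ * ‖z‖ - 1 ≤ ‖a * z‖ - ‖(n : 𝕜)‖ := by
        rw [norm_mul]; linarith
    _ ≤ ‖a * z - n‖ := norm_sub_norm_le _ _

lemma lt_mul_sub_one_of_one_div_sub_one_lt {a t : ℝ} (ha : 1 < a) (ht : 1 / (a - 1) < t) :
    t < a * t - 1 := by
  rw [div_lt_iff₀ (sub_pos.2 ha)] at ht
  linarith

theorem conjugate_growth_general (β : ℝ) (hβ : 1 < β) (hβ4 : β ^ 4 = β + 1)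
    (α : ℂ) (hα : 1 < ‖α‖)
    (K : IntermediateField ℚ ℝ)
    (hβK : β ∈ K) (σ : K →+* ℂ) (hσ : σ ⟨β, hβK⟩ = α)
    (x : K) (hx : (x : ℝ) ∈ Set.Icc (0 : ℝ) 1)
    (y : K) (hy : (y : ℝ) = β * (x : ℝ) - ⌊β * (x : ℝ)⌋) :
    ‖α‖ * ‖σ x‖ - 1 ≤ ‖σ y‖ ∧
      (1 / (‖α‖ - 1) < ‖σ x‖ →
        ‖σ x‖ < ‖σ y‖) := by
  have hdigit := floor_mul_mem_Icc_zero_one (zero_lt_one.trans hβ).le (lt_two_of_pow_four_eq_add_one hβ4) hx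
  have hyK : y = ⟨β, hβK⟩ * x - (⌊β * (x : ℝ)⌋ : K) := Subtype.ext (by push_cast; exact hy)
  have hσy : σ y = α * σ x - (⌊β * (x : ℝ)⌋ : ℂ) := by
    rw [hyK, map_sub, map_mul, map_intCast, hσ]
  have key : ‖α‖ * ‖σ x‖ - 1 ≤ ‖σ y‖ := hσy ▸ norm_mul_sub_one_le_norm_mul_sub α (σ x) hdigit
  exact ⟨key, fun h => (lt_mul_sub_one_of_one_div_sub_one_lt hα h).trans_le key⟩

theorem conjugate_growth (β : ℝ) (hβ : 1 < β) (hβ4 : β ^ 4 = β + 1)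
    (α : ℂ) (hα4 : α ^ 4 = α + 1) (hα : 1 < ‖α‖) (hαβ : α ≠ (β : ℂ))
    (K : IntermediateField ℚ ℝ) (hK : K = IntermediateField.adjoin ℚ {β})
    (hβK : β ∈ K) (σ : K →+* ℂ) (hσ : σ ⟨β, hβK⟩ = α)
    (x : K) (hx : (x : ℝ) ∈ Set.Icc (0 : ℝ) 1)
    (y : K) (hy : (y : ℝ) = β * (x : ℝ) - ⌊β * (x : ℝ)⌋) :
    ‖α‖ * ‖σ x‖ - 1 ≤ ‖σ y‖ ∧
      (1 / (‖α‖ - 1) < ‖σ x‖ →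
        ‖σ x‖ < ‖σ y‖) :=
  conjugate_growth_general β hβ hβ4 α hα K hβK σ hσ x hx y hy
end
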